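/- For every integer n ≥ 1 and all complex numbers x₁,…,xₙ, the generalized Vandermonde identity holds: ∏_{1≤i<j≤n} sinh(x_j − x_i) = det_{1≤i,j≤n} [ e^{(2j−n−1)·x_i} / 2^{j−1} ]. -/
import Mathlib


open Complex Finset

/-- For every `n ≥ 1` and complex `x₁,…,xₙ`:
`∏_{1≤i<j≤n} sinh(x_j − x_i) = det_{1≤i,j≤n} [ exp((2j−n−1)·x_i) / 2^{j−1} ]`. -/
theorem vandermonde_sinh_det (n : ℕ) (hn : 1 ≤ n) (x : Fin n → ℂ) :
    (∏ i : Fin n, ∏ j ∈ Finset.Ioi i, Complex.sinh (x j - x i)) =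
      Matrix.det (Matrix.of (fun i j : Fin n =>
        Complex.exp ((2 * ((j : ℕ) : ℂ) + 1 - (n : ℂ)) * x i) / 2 ^ (j : ℕ))) := by
  set y : Fin n → ℂ := fun i => Complex.exp (2 * x i) / 2 with hy
  have hentry : ∀ i j : Fin n,
      Complex.exp ((2 * ((j : ℕ) : ℂ) + 1 - (n : ℂ)) * x i) / 2 ^ (j : ℕ)
        = Complex.exp ((1 - (n : ℂ)) * x i) * (Matrix.vandermonde y) i j := by
    intro i j
    simp only [Matrix.vandermonde, Matrix.of_apply, hy]
    rw [div_pow, ← Complex.exp_nat_mul]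
    have : (2 * ((j : ℕ) : ℂ) + 1 - (n : ℂ)) * x i
        = (1 - (n : ℂ)) * x i + (j : ℕ) * (2 * x i) := by ring
    rw [this, Complex.exp_add]
    ring
  have hdet : Matrix.det (Matrix.of (fun i j : Fin n =>
        Complex.exp ((2 * ((j : ℕ) : ℂ) + 1 - (n : ℂ)) * x i) / 2 ^ (j : ℕ)))
      = (∏ i, Complex.exp ((1 - (n : ℂ)) * x i)) *
        ∏ i : Fin n, ∏ j ∈ Finset.Ioi i, (y j - y i) := by
    rw [← Matrix.det_vandermonde, ← Matrix.det_mul_column]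
    congr 1
    ext i j
    exact hentry i j
  rw [hdet]
  have hsinh : ∀ i j : Fin n, Complex.sinh (x j - x i)
      = (Complex.exp (-x i) * Complex.exp (-x j)) * (y j - y i) := by
    intro i j
    rw [Complex.sinh, hy]
    simp only [mul_sub, ← mul_div_assoc, ← Complex.exp_add, ← sub_div]
    rw [show -x i + -x j + 2 * x j = x j - x i by ring,
        show -x i + -x j + 2 * x i = -(x j - x i) by ring]
  simp only [hsinh]
  rw [Finset.prod_congr rfl (fun i _ => Finset.prod_mul_distrib),
    Finset.prod_mul_distrib]
  congr 1
  have := Finset.prod_prod_Ioi_mul_eq_prod_prod_off_diag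
    (f := fun a b : Fin n => Complex.exp (-x b))
  rw [this]
  refine Finset.prod_congr rfl fun i _ => ?_
  rw [Finset.prod_const]
  simp only [Finset.card_compl, Finset.card_singleton, Fintype.card_fin]
  rw [← Complex.exp_nat_mul]
  congr 1
  have : ((n - 1 : ℕ) : ℂ) = (n : ℂ) - 1 := by
    push_cast [Nat.cast_sub hn]; ring
  rw [this]
  ring
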